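/- In a dagger compact closed category, the pivotal map i_A : A → A** defined by i_A = (id_{A**} ⊗ η_A†) ∘ (η_{A*} ⊗ id_A) (up to unitors) is unitary, i.e., i_A† = i_A⁻¹. -/

import Mathlib

open CategoryTheory MonoidalCategory

/-- A dagger monoidal structure: an involutive identity-on-objects contravariant functor
compatible with the tensor, for which the structural isomorphisms are unitary. -/
structure DaggerMonoidalStruct (C : Type*) [Category C] [MonoidalCategory C] where
  dag : ∀ {A B : C}, (A ⟶ B) → (B ⟶ A)
  dag_id : ∀ A : C, dag (𝟙 A) = 𝟙 A
  dag_comp : ∀ {A B D : C} (f : A ⟶ B) (g : B ⟶ D), dag (f ≫ g) = dag g ≫ dag f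
  dag_dag : ∀ {A B : C} (f : A ⟶ B), dag (dag f) = f
  dag_tensor : ∀ {A B A' B' : C} (f : A ⟶ A') (g : B ⟶ B'),
    dag (f ⊗ₘ g) = dag f ⊗ₘ dag g
  dag_assoc : ∀ A B D : C, dag (α_ A B D).hom = (α_ A B D).inv
  dag_leftUnitor : ∀ A : C, dag (λ_ A).hom = (λ_ A).inv
  dag_rightUnitor : ∀ A : C, dag (ρ_ A).hom = (ρ_ A).inv

variable {C : Type*} [Category C] [MonoidalCategory C] [SymmetricCategory C] [RightRigidCategory C]

/-- The canonical map `i_A : A ⟶ Aᘁᘁ` of a right autonomous dagger monoidal category,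
defined (up to unitors) from the coevaluation of `Aᘁ` and the dagger of the coevaluation
of `A`. -/
noncomputable def daggerPivMap (D : DaggerMonoidalStruct C) (A : C) : A ⟶ ((Aᘁ)ᘁ : C) :=
  (ρ_ A).inv ≫ (A ◁ η_ (Aᘁ : C) ((Aᘁ)ᘁ)) ≫ (α_ A (Aᘁ : C) (((Aᘁ)ᘁ : C))).inv ≫
    ((D.dag (η_ A (Aᘁ))) ▷ (((Aᘁ)ᘁ : C))) ≫ (λ_ (((Aᘁ)ᘁ : C))).hom

/-!
The compatibility `η_A = σ ∘ ε_A†` together with unitarity of the symmetry gives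
`η_A† = ε_A ∘ σ`, the evaluation of the swapped pairing that exhibits `A` as a right dual of `Aᘁ`.
Hence `i_A` is the canonical comparison isomorphism between the two right duals `A` and `Aᘁᘁ`
of `Aᘁ`, and a symmetric zigzag identity identifies `i_A†` with the comparison map in the
opposite direction.
-/

namespace DaggerMonoidalStruct

variable {C : Type*} [Category C] [MonoidalCategory C] (D : DaggerMonoidalStruct C)

lemma dag_whiskerLeft (X : C) {A B : C} (f : A ⟶ B) : D.dag (X ◁ f) = X ◁ D.dag f := by
  rw [← id_tensorHom, D.dag_tensor, D.dag_id, id_tensorHom]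

lemma dag_whiskerRight {A B : C} (f : A ⟶ B) (X : C) : D.dag (f ▷ X) = D.dag f ▷ X := by
  rw [← tensorHom_id, D.dag_tensor, D.dag_id, tensorHom_id]

lemma dag_inv_of_dag_hom {A B : C} (e : A ≅ B) (h : D.dag e.hom = e.inv) :
    D.dag e.inv = e.hom := by
  rw [← h, D.dag_dag]

lemma dag_rightUnitor_inv (A : C) : D.dag (ρ_ A).inv = (ρ_ A).hom :=
  D.dag_inv_of_dag_hom _ (D.dag_rightUnitor A)

lemma dag_assoc_inv (A B E : C) : D.dag (α_ A B E).inv = (α_ A B E).hom :=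
  D.dag_inv_of_dag_hom _ (D.dag_assoc A B E)

lemma dag_coevaluation [SymmetricCategory C] {X Y : C} [ExactPairing X Y]
    (hβ : D.dag (β_ Y X).hom = (β_ Y X).inv) (hη : η_ X Y = D.dag (ε_ X Y) ≫ (β_ Y X).hom) :
    D.dag (η_ X Y) = (β_ X Y).hom ≫ ε_ X Y := by
  rw [hη, D.dag_comp, hβ, D.dag_dag, SymmetricCategory.braiding_swap_eq_inv_braiding]

end DaggerMonoidalStruct

section RightDuals

variable {C : Type*} [Category C] [MonoidalCategory C]

lemma rightDualIso_hom_eq {X Y₁ Y₂ : C} (p₁ : ExactPairing X Y₁) (p₂ : ExactPairing X Y₂) :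
    (rightDualIso p₁ p₂).hom = (ρ_ Y₁).inv ≫ Y₁ ◁ p₂.coevaluation' ≫ (α_ Y₁ X Y₂).inv ≫
      p₁.evaluation' ▷ Y₂ ≫ (λ_ Y₂).hom := by
  simp [rightDualIso, rightAdjointMate, ExactPairing.evaluation, ExactPairing.coevaluation]

lemma rightDualIso_inv_eq {X Y₁ Y₂ : C} (p₁ : ExactPairing X Y₁) (p₂ : ExactPairing X Y₂) :
    (rightDualIso p₁ p₂).inv = (ρ_ Y₂).inv ≫ Y₂ ◁ p₁.coevaluation' ≫ (α_ Y₂ X Y₁).inv ≫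
      p₂.evaluation' ▷ Y₁ ≫ (λ_ Y₁).hom :=
  rightDualIso_hom_eq p₂ p₁

end RightDuals

section Symmetric

variable {C : Type*} [Category C] [MonoidalCategory C] [SymmetricCategory C]

lemma SymmetricCategory.leftZigzag_eq_rightZigzag (A X P : C) (η : 𝟙_ C ⟶ A ⊗ X)
    (ε : P ⊗ X ⟶ 𝟙_ C) :
    (λ_ P).inv ≫ η ▷ P ≫ (α_ A X P).hom ≫ A ◁ ((β_ X P).hom ≫ ε) ≫ (ρ_ A).hom =
      (ρ_ P).inv ≫ P ◁ (η ≫ (β_ A X).hom) ≫ (α_ P X A).inv ≫ ε ▷ A ≫ (λ_ A).hom := by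
  have h1 : (λ_ P).inv ≫ η ▷ P = (ρ_ P).inv ≫ P ◁ η ≫ (β_ P (A ⊗ X)).hom := by
    rw [BraidedCategory.braiding_naturality_right, braiding_tensorUnit_right]
    simp
  have h2 : ε ▷ A ≫ (λ_ A).hom = (β_ (P ⊗ X) A).hom ≫ A ◁ ε ≫ (ρ_ A).hom := by
    rw [← BraidedCategory.braiding_naturality_left_assoc, braiding_tensorUnit_left]
    simp
  rw [← Category.assoc, h1, whiskerLeft_comp, Category.assoc, Category.assoc, h2]
  simp only [BraidedCategory.braiding_tensor_left_hom, BraidedCategory.braiding_tensor_right_hom,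
    Category.assoc, whiskerLeft_comp]
  simp only [Iso.inv_hom_id_assoc, ← whiskerLeft_comp_assoc, SymmetricCategory.symmetry,
    whiskerLeft_id, Category.id_comp, SymmetricCategory.symmetry_assoc]

end Symmetric

section PivotalMap

variable (D : DaggerMonoidalStruct C)

lemma daggerPivMap_eq_rightDualIso_hom
    (dag_braiding : ∀ A B : C, D.dag (β_ A B).hom = (β_ A B).inv)
    (compat : ∀ A : C, η_ A (Aᘁ) = D.dag (ε_ A (Aᘁ)) ≫ (β_ (Aᘁ : C) A).hom) (A : C) :
    daggerPivMap D A = (rightDualIso (BraidedCategory.exactPairing_swap A Aᘁ)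
      (inferInstance : ExactPairing Aᘁ Aᘁᘁ)).hom := by
  rw [rightDualIso_hom_eq, daggerPivMap, D.dag_coevaluation (dag_braiding _ _) (compat A)]
  rfl

lemma dag_daggerPivMap_eq_rightDualIso_inv
    (dag_braiding : ∀ A B : C, D.dag (β_ A B).hom = (β_ A B).inv)
    (compat : ∀ A : C, η_ A (Aᘁ) = D.dag (ε_ A (Aᘁ)) ≫ (β_ (Aᘁ : C) A).hom) (A : C) :
    D.dag (daggerPivMap D A) = (rightDualIso (BraidedCategory.exactPairing_swap A Aᘁ)
      (inferInstance : ExactPairing Aᘁ Aᘁᘁ)).inv := by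
  have hswap : (BraidedCategory.exactPairing_swap A Aᘁ).coevaluation' =
      η_ A Aᘁ ≫ (β_ A Aᘁ).hom :=
    congrArg (η_ A Aᘁ ≫ ·) (SymmetricCategory.braiding_swap_eq_inv_braiding _ _).symm
  rw [rightDualIso_inv_eq, hswap]
  simp only [daggerPivMap, D.dag_comp, D.dag_dag, D.dag_whiskerLeft, D.dag_whiskerRight,
    D.dag_leftUnitor, D.dag_rightUnitor_inv, D.dag_assoc_inv,
    D.dag_coevaluation (dag_braiding _ _) (compat Aᘁ), Category.assoc]
  exact SymmetricCategory.leftZigzag_eq_rightZigzag _ _ _ _ _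

end PivotalMap

/-- In a dagger compact closed category — a dagger symmetric monoidal right autonomous
category whose symmetry is unitary and whose duality units satisfy the compatibility
`η_A = σ ∘ (ε_A)†` — the pivotal map `i_A : A ⟶ Aᘁᘁ` is unitary: `i_A† = i_A⁻¹`. -/
theorem daggerCompactClosed_pivMap_unitary (D : DaggerMonoidalStruct C)
    (dag_braiding : ∀ A B : C, D.dag (β_ A B).hom = (β_ A B).inv)
    (compat : ∀ A : C, η_ A (Aᘁ) = D.dag (ε_ A (Aᘁ)) ≫ (β_ (Aᘁ : C) A).hom) (A : C) :
    daggerPivMap D A ≫ D.dag (daggerPivMap D A) = 𝟙 A ∧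
    D.dag (daggerPivMap D A) ≫ daggerPivMap D A = 𝟙 (((Aᘁ)ᘁ : C)) := by
  rw [dag_daggerPivMap_eq_rightDualIso_inv D dag_braiding compat,
    daggerPivMap_eq_rightDualIso_hom D dag_braiding compat]
  exact ⟨Iso.hom_inv_id _, Iso.inv_hom_id _⟩
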